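/- arXiv:2509.11597 — 5 statements merged into one kernel-verified Lean document; each statement's English description precedes it below -/
import Mathlib

section
/- The image of the set {z ∈ ℂ : |z| > 1} under the Joukowski map φ(z) = z + 1/z is exactly ℂ \ [-2, 2], where [-2,2] denotes the real segment {x + 0i : -2 ≤ x ≤ 2}. -/
/-!
For `z ≠ 0` the equation `z + 1/z = w` is the quadratic `z² - w z + 1 = 0`, whose two roots are
`z` and `1/z`. When `w = x` is real with `|x| ≤ 2` the discriminant `x² - 4` is nonpositive, so
`z = x/2 + i t` with `t² = 1 - x²/4`, i.e. `|z| = 1`; conversely on the unit circle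
`z + 1/z = z + z̄ = 2 Re z ∈ [-2, 2]`. Hence `w ∉ [-2, 2]` exactly when the roots `z, 1/z` lie off
the unit circle, and then one of them lies outside it.
-/

namespace Complex

theorem norm_eq_one_of_add_one_div_eq_ofReal {z : ℂ} {x : ℝ} (hz : z ≠ 0) (hx : |x| ≤ 2)
    (h : z + 1 / z = x) : ‖z‖ = 1 := by
  have hq : z ^ 2 - x * z + 1 = 0 := by
    field_simp at h
    linear_combination h
  have hre : z.re ^ 2 - z.im ^ 2 - x * z.re + 1 = 0 := by
    simpa [pow_two] using congrArg re hq
  have him : z.im * (2 * z.re - x) = 0 := by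
    have := congrArg im hq
    simp only [pow_two, sub_im, add_im, mul_im, ofReal_re, ofReal_im, one_im, zero_im] at this
    linear_combination this
  have hx2 : x ^ 2 ≤ 4 := by nlinarith [abs_le.1 hx, sq_abs x]
  suffices normSq z = 1 by rw [norm_def, this, Real.sqrt_one]
  rw [normSq_apply]
  rcases mul_eq_zero.1 him with him | him
  · have hdisc : (2 * z.re - x) ^ 2 = x ^ 2 - 4 := by
      rw [him] at hre
      linear_combination 4 * hre
    have hroot : 2 * z.re = x := by nlinarith [sq_nonneg (2 * z.re - x)]
    rw [him]
    nlinarith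
  · linear_combination -hre + z.re * him

theorem add_one_div_eq_two_mul_re_of_norm_eq_one {z : ℂ} (hz : ‖z‖ = 1) :
    z + 1 / z = (2 * z.re : ℝ) := by
  rw [one_div, inv_eq_conj hz, add_conj]

theorem add_one_div_mem_Icc_iff_norm_eq_one {z : ℂ} (hz : z ≠ 0) :
    z + 1 / z ∈ (fun x : ℝ => (x : ℂ)) '' Set.Icc (-2) 2 ↔ ‖z‖ = 1 := by
  constructor
  · rintro ⟨x, hx, hxz⟩
    exact norm_eq_one_of_add_one_div_eq_ofReal hz (abs_le.2 hx) hxz.symm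
  · intro h
    refine ⟨2 * z.re, abs_le.1 ?_, (add_one_div_eq_two_mul_re_of_norm_eq_one h).symm⟩
    rw [abs_mul, abs_two]
    linarith [abs_re_le_norm z]

theorem inv_add_one_div_inv (z : ℂ) : z⁻¹ + 1 / z⁻¹ = z + 1 / z := by
  rw [one_div, one_div, inv_inv, add_comm]

theorem exists_ne_zero_add_one_div_eq (w : ℂ) : ∃ z ≠ 0, z + 1 / z = w := by
  obtain ⟨d, hd⟩ : ∃ d : ℂ, d ^ 2 = w ^ 2 - 4 := IsAlgClosed.exists_pow_nat_eq _ two_pos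
  have hmul : (w + d) / 2 * ((w - d) / 2) = 1 := by linear_combination (-1 / 4 : ℂ) * hd
  refine ⟨(w + d) / 2, left_ne_zero_of_mul_eq_one hmul, ?_⟩
  rw [one_div, inv_eq_of_mul_eq_one_right hmul]
  ring

end Complex

open Complex in
theorem joukowski_image_exterior :
    (fun z : ℂ => z + 1 / z) '' {z : ℂ | 1 < ‖z‖} =
      Set.univ \ ((fun x : ℝ => (x : ℂ)) '' Set.Icc (-2 : ℝ) 2) := by
  ext w
  rw [Set.mem_sdiff, and_iff_right (Set.mem_univ w)]
  constructor
  · rintro ⟨z, hz, rfl⟩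
    rw [add_one_div_mem_Icc_iff_norm_eq_one (norm_pos_iff.1 (one_pos.trans hz))]
    exact hz.ne'
  · intro hw
    obtain ⟨z, hz, rfl⟩ := exists_ne_zero_add_one_div_eq w
    have hz_ne_one : ‖z‖ ≠ 1 := fun h => hw ((add_one_div_mem_Icc_iff_norm_eq_one hz).2 h)
    rcases hz_ne_one.lt_or_gt with hlt | hgt
    · refine ⟨z⁻¹, ?_, inv_add_one_div_inv z⟩
      rw [Set.mem_ofPred_eq, norm_inv, one_lt_inv₀ (norm_pos_iff.2 hz)]
      exact hlt
    · exact ⟨z, hgt, rfl⟩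
end

section
/- For 0 < c < 4, the map ψ(z) = (c/4)(z + 1/z + 2) is injective on {z ∈ ℂ : |z| > 1}, and its image is ℂ \ [0, c], where [0,c] is the real segment {x + 0i : 0 ≤ x ≤ c}. -/
open Set Complex

/-! Write `J z = z + z⁻¹`, so that `ψ` is `J` followed by the real affine bijection
`w ↦ (c/4)(w + 2)`, which carries `[-2, 2]` onto `[0, c]`. Clearing denominators,
`J a = J b` forces `a = b` or `a b = 1`; this gives injectivity on `|z| > 1`, and, compared with
`J (e^{iθ}) = 2 cos θ`, shows that `J z ∈ [-2, 2]` exactly when `|z| = 1`. Since `J` is onto `ℂ`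
and `J z = J z⁻¹`, every value off `[-2, 2]` is attained at a point with `|z| > 1`. -/

section Field

variable {K : Type*} [Field K]

theorem eq_or_mul_eq_one_of_add_inv_eq_add_inv {a b : K} (ha : a ≠ 0) (hb : b ≠ 0)
    (h : a + a⁻¹ = b + b⁻¹) : a = b ∨ a * b = 1 := by
  have hfac : (a - b) * (a * b - 1) = 0 := by
    field_simp at h
    linear_combination h
  rcases mul_eq_zero.mp hfac with h | h
  · exact .inl (sub_eq_zero.mp h)
  · exact .inr (sub_eq_zero.mp h)

theorem exists_ne_zero_add_inv_eq [IsAlgClosed K] [NeZero (2 : K)] (w : K) :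
    ∃ z ≠ 0, z + z⁻¹ = w := by
  obtain ⟨z, hz⟩ := exists_quadratic_eq_zero (a := (1 : K)) (b := -w) (c := 1) one_ne_zero
    (IsAlgClosed.exists_eq_mul_self _)
  have hz0 : z ≠ 0 := by rintro rfl; simp at hz
  refine ⟨z, hz0, ?_⟩
  field_simp
  linear_combination hz

end Field

namespace Complex

theorem add_inv_eq_two_mul_re {z : ℂ} (hz : ‖z‖ = 1) : z + z⁻¹ = (2 * z.re : ℝ) := by
  rw [inv_eq_conj hz, add_conj]

theorem add_inv_mem_image_ofReal_Icc_iff {z : ℂ} (hz : z ≠ 0) :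
    z + z⁻¹ ∈ ofReal '' Icc (-2) 2 ↔ ‖z‖ = 1 := by
  constructor
  · rintro ⟨t, ht, hzt⟩
    set w := exp (Real.arccos (t / 2) * I)
    have hw : ‖w‖ = 1 := norm_exp_ofReal_mul_I _
    have hwt : w + w⁻¹ = t := by
      rw [add_inv_eq_two_mul_re hw, exp_ofReal_mul_I_re, Real.cos_arccos (by linarith [ht.1])
        (by linarith [ht.2])]
      push_cast
      ring
    rcases eq_or_mul_eq_one_of_add_inv_eq_add_inv hz (norm_ne_zero_iff.mp (by simp [hw]))
      (hzt ▸ hwt.symm) with rfl | hzw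
    · exact hw
    · simpa [hw] using congrArg norm hzw
  · intro h
    have hre := abs_le.mp (h ▸ abs_re_le_norm z)
    exact ⟨2 * z.re, ⟨by linarith [hre.1], by linarith [hre.2]⟩, (add_inv_eq_two_mul_re h).symm⟩

theorem injOn_add_inv_setOf_one_lt_norm : InjOn (fun z : ℂ => z + z⁻¹) {z | 1 < ‖z‖} := by
  intro z hz w hw h
  have hz0 : z ≠ 0 := norm_pos_iff.mp (one_pos.trans hz)
  have hw0 : w ≠ 0 := norm_pos_iff.mp (one_pos.trans hw)
  refine (eq_or_mul_eq_one_of_add_inv_eq_add_inv hz0 hw0 h).resolve_right fun hzw => ?_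
  have : ‖z‖ * ‖w‖ = 1 := by rw [← norm_mul, hzw, norm_one]
  nlinarith [show 1 < ‖z‖ from hz, show 1 < ‖w‖ from hw]

theorem image_add_inv_setOf_one_lt_norm :
    (fun z : ℂ => z + z⁻¹) '' {z | 1 < ‖z‖} = (ofReal '' Icc (-2) 2)ᶜ := by
  ext v
  constructor
  · rintro ⟨z, hz, rfl⟩ hv
    have hz0 : z ≠ 0 := norm_pos_iff.mp (one_pos.trans hz)
    exact (show 1 < ‖z‖ from hz).ne' ((add_inv_mem_image_ofReal_Icc_iff hz0).mp hv)
  · intro hv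
    obtain ⟨z, hz0, rfl⟩ := exists_ne_zero_add_inv_eq v
    have hz1 : ‖z‖ ≠ 1 := fun h => hv ((add_inv_mem_image_ofReal_Icc_iff hz0).mpr h)
    rcases hz1.lt_or_gt with hlt | hgt
    · refine ⟨z⁻¹, ?_, by simp [add_comm]⟩
      show 1 < ‖z⁻¹‖
      rw [norm_inv]
      exact one_lt_inv_iff₀.mpr ⟨norm_pos_iff.mpr hz0, hlt⟩
    · exact ⟨z, hgt, rfl⟩

theorem image_ofReal_Icc_mul_add {a : ℝ} (ha : 0 < a) (b s t : ℝ) :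
    (fun w : ℂ => a * w + b) '' (ofReal '' Icc s t) = ofReal '' Icc (a * s + b) (a * t + b) := by
  rw [image_image, ← image_affine_Icc' ha, image_image]
  push_cast
  rfl

end Complex

theorem shifted_joukowski_injOn_image_general (c : ℝ) (hc0 : 0 < c) :
    Set.InjOn (fun z : ℂ => (c / 4 : ℂ) * (z + 1 / z + 2)) {z : ℂ | 1 < ‖z‖} ∧
    (fun z : ℂ => (c / 4 : ℂ) * (z + 1 / z + 2)) '' {z : ℂ | 1 < ‖z‖} =
      Set.univ \ ((fun x : ℝ => (x : ℂ)) '' Set.Icc (0 : ℝ) c) := by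
  set A : ℂ → ℂ := fun w => (c / 4 : ℝ) * w + (c / 2 : ℝ)
  have hA : Function.Bijective A :=
    ((Equiv.mulLeft₀ ((c / 4 : ℝ) : ℂ) (ofReal_ne_zero.mpr (by positivity))).trans
      (Equiv.addRight _)).bijective
  have hψ : (fun z : ℂ => (c / 4 : ℂ) * (z + 1 / z + 2)) = A ∘ fun z => z + z⁻¹ := by
    funext z
    simp only [A, Function.comp_apply]
    push_cast
    ring
  have hseg : A '' (ofReal '' Icc (-2) 2) = ofReal '' Icc 0 c := by
    rw [Complex.image_ofReal_Icc_mul_add (by positivity)]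
    congr 2 <;> ring
  rw [hψ, image_comp, Complex.image_add_inv_setOf_one_lt_norm, image_compl_eq hA, hseg,
    compl_eq_univ_sdiff]
  exact ⟨hA.injective.comp_injOn Complex.injOn_add_inv_setOf_one_lt_norm, rfl⟩

theorem shifted_joukowski_injOn_image (c : ℝ) (hc0 : 0 < c) (hc4 : c < 4) :
    Set.InjOn (fun z : ℂ => (c / 4 : ℂ) * (z + 1 / z + 2)) {z : ℂ | 1 < ‖z‖} ∧
    (fun z : ℂ => (c / 4 : ℂ) * (z + 1 / z + 2)) '' {z : ℂ | 1 < ‖z‖} =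
      Set.univ \ ((fun x : ℝ => (x : ℂ)) '' Set.Icc (0 : ℝ) c) :=
  shifted_joukowski_injOn_image_general c hc0
end

section
/- For any monic complex polynomial p of degree n ≥ 1, the set {z ∈ ℂ : |p(z)| ≤ 1} has at most n connected components, and each connected component contains at least one root of p. -/
/-!
Off the roots, `|p|` has no local minimum (minimum modulus principle), and the sublevel set
`{|p| ≤ 1}` is compact. Around any connected component of a compact space there are clopen
neighbourhoods as small as we like; minimizing `|p|` over such a neighbourhood avoiding the roots
would give a local minimum of `|p|` in `ℂ`. So every component contains a root, and distinct
components contain distinct roots, of which there are at most `n`.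
-/

open Set Topology Polynomial

section Sublevel

variable {X : Type*} [TopologicalSpace X]

theorem exists_isClopen_of_connectedComponent_subset [T2Space X] [CompactSpace X] {x : X}
    {U : Set X} (hU : IsOpen U) (h : connectedComponent x ⊆ U) :
    ∃ V, IsClopen V ∧ x ∈ V ∧ V ⊆ U := by
  let N := { s : Set X // IsClopen s ∧ x ∈ s }
  have : Nonempty N := ⟨⟨univ, isClopen_univ, mem_univ x⟩⟩
  have hdir : Directed (· ⊇ ·) fun s : N => s.val := by
    rintro ⟨s, hs, hxs⟩ ⟨t, ht, hxt⟩
    exact ⟨⟨s ∩ t, hs.inter ht, hxs, hxt⟩, inter_subset_left, inter_subset_right⟩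
  have hnhds : ∀ y ∈ ⋂ s : N, s.val, U ∈ 𝓝 y := fun y hy => by
    rw [← connectedComponent_eq_iInter_isClopen] at hy
    exact hU.mem_nhds (h hy)
  obtain ⟨⟨V, hV, hxV⟩, hVU⟩ :=
    exists_subset_nhds_of_compactSpace hdir (fun s => s.property.1.1) hnhds
  exact ⟨V, hV, hxV, hVU⟩

theorem isLocalMin_of_isMinOn_inter_sublevel {g : X → ℝ} {c : ℝ} {O : Set X} (hO : IsOpen O)
    {y : X} (hyO : y ∈ O) (hmin : IsMinOn g (O ∩ {x | g x ≤ c}) y) (hyc : g y ≤ c) :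
    IsLocalMin g y := by
  filter_upwards [hO.mem_nhds hyO] with w hwO
  by_contra! hlt
  exact (hmin ⟨hwO, hlt.le.trans hyc⟩).not_gt hlt

theorem exists_mem_connectedComponentIn_of_isLocalMin_mem [T2Space X] {g : X → ℝ}
    (hg : Continuous g) {c : ℝ} (hS : IsCompact {x | g x ≤ c}) {Z : Set X} (hZ : IsClosed Z)
    (hmin : ∀ x, IsLocalMin g x → x ∈ Z) {z : X} (hz : g z ≤ c) :
    ∃ r ∈ connectedComponentIn {x | g x ≤ c} z, r ∈ Z := by
  set S := {x | g x ≤ c}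
  have hzS : z ∈ S := hz
  by_contra! hcomp
  have : CompactSpace S := isCompact_iff_compactSpace.mp hS
  have hsub : connectedComponent (⟨z, hzS⟩ : S) ⊆ Subtype.val ⁻¹' Zᶜ := fun y hy =>
    hcomp y ((connectedComponentIn_eq_image hzS).symm ▸ mem_image_of_mem _ hy)
  obtain ⟨V, hV, hzV, hVZ⟩ := exists_isClopen_of_connectedComponent_subset
    (hZ.isOpen_compl.preimage continuous_subtype_val) hsub
  obtain ⟨O, hO, rfl⟩ := isOpen_induced_iff.mp hV.isOpen
  have hOS : Subtype.val '' (Subtype.val ⁻¹' O : Set S) = O ∩ S := by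
    rw [Subtype.image_preimage_coe, inter_comm]
  have hK : IsCompact (O ∩ S) := hOS ▸ hV.isClosed.isCompact.image continuous_subtype_val
  obtain ⟨y, ⟨hyO, hyS⟩, hy⟩ := hK.exists_isMinOn ⟨z, hzV, hzS⟩ hg.continuousOn
  exact hVZ (a := ⟨y, hyS⟩) hyO (hmin y (isLocalMin_of_isMinOn_inter_sublevel hO hyO hy hyS))

theorem ncard_connectedComponentIn_le_of_forall_exists_mem {S Z : Set X} (hZ : Z.Finite)
    (h : ∀ z ∈ S, ∃ r ∈ connectedComponentIn S z, r ∈ Z) :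
    {C : Set X | ∃ z ∈ S, C = connectedComponentIn S z}.ncard ≤ Z.ncard := by
  have hsub : {C : Set X | ∃ z ∈ S, C = connectedComponentIn S z} ⊆
      (connectedComponentIn S ·) '' Z := by
    rintro _ ⟨z, hz, rfl⟩
    obtain ⟨r, hr, hrZ⟩ := h z hz
    exact ⟨r, hrZ, (connectedComponentIn_eq hr).symm⟩
  exact (ncard_le_ncard hsub (hZ.image _)).trans (ncard_image_le hZ)

end Sublevel

namespace Polynomial

theorem isCompact_setOf_norm_eval_le {R : Type*} [NormedRing R] [IsAbsoluteValue (norm : R → ℝ)]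
    [ProperSpace R] {p : R[X]} (hp : 0 < p.degree) (c : ℝ) :
    IsCompact {z | ‖p.eval z‖ ≤ c} := by
  simpa [Metric.closedBall, dist_eq_norm] using
    (p.isProperMap_eval hp).isCompact_preimage (isCompact_closedBall 0 c)

theorem eval_eq_zero_of_isLocalMin_norm {p : ℂ[X]} (hp : 0 < p.natDegree) {c : ℂ}
    (h : IsLocalMin (fun z => ‖p.eval z‖) c) : p.eval c = 0 := by
  refine (Complex.eventually_eq_or_eq_zero_of_isLocalMin_norm
    (.of_forall fun _ => p.differentiableAt) h).resolve_left fun hconst => ?_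
  have hC : p = C (p.eval c) :=
    p.eq_of_infinite_eval_eq _ (by simpa using infinite_of_mem_nhds c hconst)
  rw [hC, natDegree_C] at hp
  exact hp.false

end Polynomial

theorem sublevel_at_most_n_components_general (p : Polynomial ℂ) (hdeg : 1 ≤ p.natDegree) :
    Set.ncard {C : Set ℂ | ∃ z ∈ {z : ℂ | ‖p.eval z‖ ≤ 1},
        C = connectedComponentIn {z : ℂ | ‖p.eval z‖ ≤ 1} z} ≤
      p.natDegree ∧
    ∀ z ∈ {z : ℂ | ‖p.eval z‖ ≤ 1},
      ∃ r ∈ connectedComponentIn {z : ℂ | ‖p.eval z‖ ≤ 1} z,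
        p.eval r = 0 := by
  have hp0 : p ≠ 0 := ne_zero_of_natDegree_gt hdeg
  have hroots : ∀ z ∈ {z : ℂ | ‖p.eval z‖ ≤ 1},
      ∃ r ∈ connectedComponentIn {z : ℂ | ‖p.eval z‖ ≤ 1} z, r ∈ p.rootSet ℂ :=
    fun _ => exists_mem_connectedComponentIn_of_isLocalMin_mem p.continuous.norm
      (isCompact_setOf_norm_eval_le (natDegree_pos_iff_degree_pos.mp hdeg) 1)
      (p.rootSet_finite ℂ).isClosed
      fun z hz => mem_rootSet.mpr ⟨hp0, by simpa using eval_eq_zero_of_isLocalMin_norm hdeg hz⟩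
  refine ⟨(ncard_connectedComponentIn_le_of_forall_exists_mem (p.rootSet_finite ℂ) hroots).trans
    (p.ncard_rootSet_le ℂ), fun z hz => ?_⟩
  obtain ⟨r, hr, hroot⟩ := hroots z hz
  exact ⟨r, hr, by simpa [mem_rootSet, hp0] using hroot⟩

theorem sublevel_at_most_n_components (p : Polynomial ℂ) (hp : p.Monic)
    (hdeg : 1 ≤ p.natDegree) :
    Set.ncard {C : Set ℂ | ∃ z ∈ {z : ℂ | ‖p.eval z‖ ≤ 1},
        C = connectedComponentIn {z : ℂ | ‖p.eval z‖ ≤ 1} z} ≤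
      p.natDegree ∧
    ∀ z ∈ {z : ℂ | ‖p.eval z‖ ≤ 1},
      ∃ r ∈ connectedComponentIn {z : ℂ | ‖p.eval z‖ ≤ 1} z,
        p.eval r = 0 :=
  sublevel_at_most_n_components_general p hdeg
end

section
/- For every n ≥ 1, the set {z ∈ ℂ : |z^n - 1| ≤ 1} is connected. -/
/-! The sublevel set is the preimage of the closed disc `‖w - 1‖ ≤ 1` under `z ↦ z ^ n`. That disc
is convex and contains `0`, and `(t • z) ^ n = t ^ n • z ^ n` with `t ^ n ∈ [0, 1]` for `t ∈ [0, 1]`,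
so the sublevel set is star-shaped about `0`, hence path connected. -/

theorem StarConvex.preimage_pow {𝕜 A : Type*} [CommRing 𝕜] [PartialOrder 𝕜] [IsOrderedRing 𝕜]
    [Semiring A] [Module 𝕜 A] [IsScalarTower 𝕜 A A] [SMulCommClass 𝕜 A A] {s : Set A}
    (hs : StarConvex 𝕜 0 s) (n : ℕ) : StarConvex 𝕜 0 ((· ^ n) ⁻¹' s) := by
  rw [starConvex_zero_iff] at hs ⊢
  intro z hz t ht₀ ht₁
  simpa only [Set.mem_preimage, smul_pow] using
    hs hz (pow_nonneg ht₀ n) (pow_le_one₀ ht₀ ht₁)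

theorem lemniscate_level_one_connected_general (n : ℕ) :
    IsConnected {z : ℂ | ‖z ^ n - 1‖ ≤ 1} := by
  have hpreimage : {z : ℂ | ‖z ^ n - 1‖ ≤ 1} = (· ^ n) ⁻¹' Metric.closedBall 1 1 := by
    ext z
    simp [dist_eq_norm]
  have hdisc : StarConvex ℝ 0 (Metric.closedBall (1 : ℂ) 1) :=
    (convex_closedBall 1 1).starConvex (by simp)
  have hzero : (0 : ℂ) ^ n ∈ Metric.closedBall 1 1 := by
    rcases n with _ | n <;> simp
  rw [hpreimage]
  exact ((hdisc.preimage_pow n).isPathConnected hzero).isConnected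

theorem lemniscate_level_one_connected (n : ℕ) (hn : 1 ≤ n) :
    IsConnected {z : ℂ | ‖z ^ n - 1‖ ≤ 1} :=
  lemniscate_level_one_connected_general n
end

section
/- Assuming the Hilbert Lemniscate Theorem (for any compact K ⊂ ℂ with connected complement and any ε > 0 there is a polynomial q with K ⊆ {z : |q(z)| ≤ sup_K |q|} ⊆ {z : dist(z,K) ≤ ε}) and the capacity rescaling argument, for every 0 < c < 4 and N ∈ ℕ there exists a monic polynomial p(z) = z^n + a_{n-1}z^{n-1} + ... + a_0 such that {z ∈ ℂ : |p(z)| ≤ 1} has at least N connected components each of diameter at least c. -/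
/-!
Fix `c / 4 < r < 1` and put `N + 1` parallel needles `[-2r, 2r] × {k δ}` very close together.
The Hilbert lemniscate theorem gives `q` whose filled lemniscate `L = {|q| ≤ t}` contains the
needles and lies in their `δ / 4`-neighbourhood, so the needles lie in distinct components of `L`,
each of diameter at least `4r`. Moreover `L` lies inside the ellipse with semi-axes `1 ± r²`, the
image of the unit circle under the Joukowski map `u ↦ u + r² / u`. Hence `u ^ n q (u + r² / u)`
has all its roots in the unit disc and modulus `> t` on the unit circle, and Jensen's formula
gives `t ≤ |lead q|`: the capacity of `L` is at most `1`. Rescaling by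
`(t / |lead q|) ^ (1 / n) ≤ 1` turns `q` into a monic `p` whose filled lemniscate `{|p| ≤ 1}` is
an enlarged copy of `L`.
-/

open Polynomial Set Metric Real
open scoped Pointwise Topology

namespace Polynomial

/-- Jensen's formula: the Mahler measure, the geometric mean of `‖p‖` over the unit circle, equals
`‖p.leadingCoeff‖` when all roots of `p` lie in the closed unit disc. -/
theorem le_norm_leadingCoeff_of_roots_le_one {p : ℂ[X]} {s : ℝ}
    (hroots : ∀ z ∈ p.roots, ‖z‖ ≤ 1) (hs : ∀ u : ℂ, ‖u‖ = 1 → s ≤ ‖p.eval u‖) :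
    s ≤ ‖p.leadingCoeff‖ := by
  rcases le_or_gt s 0 with hs0 | hs0
  · exact hs0.trans (norm_nonneg _)
  have hp : p ≠ 0 := by
    rintro rfl
    simpa using hs0.trans_le (hs 1 norm_one)
  have hM : p.mahlerMeasure = ‖p.leadingCoeff‖ := by
    rw [mahlerMeasure_eq_leadingCoeff_mul_prod_roots, Multiset.prod_eq_one, mul_one]
    simp only [Multiset.mem_map]
    rintro _ ⟨z, hz, rfl⟩
    exact max_eq_left (hroots z hz)
  have hlog : log s ≤ p.logMahlerMeasure := by
    rw [logMahlerMeasure_def, ← circleAverage_const (log s) 0 1]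
    refine circleAverage_mono (circleIntegrable_const _ _ _)
      (analyticOnNhd_id.aeval_polynomial p).meromorphicOn.circleIntegrable_log_norm fun u hu => ?_
    exact log_le_log hs0 (hs u (by simpa using hu))
  rw [← hM, mahlerMeasure_def_of_ne_zero hp, ← exp_log hs0]
  exact exp_le_exp.2 hlog

theorem natDegree_ne_zero_of_norm_eval_le_lt {R : Type*} [Semiring R] [Norm R] {q : R[X]}
    {t : ℝ} {z w : R} (hz : ‖q.eval z‖ ≤ t) (hw : t < ‖q.eval w‖) : q.natDegree ≠ 0 := by
  intro h
  obtain ⟨x, rfl⟩ := natDegree_eq_zero.1 h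
  simp only [eval_C] at hz hw
  exact hz.not_gt hw

theorem pos_of_infinite_subset_sublevel {K : Type*} [NormedField K] {q : K[X]} (hq : q ≠ 0)
    {t : ℝ} {S : Set K} (hS : S.Infinite) (hSq : S ⊆ {z | ‖q.eval z‖ ≤ t}) : 0 < t := by
  by_contra! ht
  exact hS ((finite_setOfPred_isRoot hq).subset fun z hz =>
    norm_le_zero_iff.1 ((hSq hz).trans ht))

theorem exists_monic_sublevel_eq_smul {q : ℂ[X]} (hq : q.natDegree ≠ 0) {t : ℝ} (ht : 0 < t)
    (hta : t ≤ ‖q.leadingCoeff‖) :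
    ∃ p : ℂ[X], p.Monic ∧ ∃ c : ℂ, 1 ≤ ‖c‖ ∧
      {z | ‖p.eval z‖ ≤ 1} = c • {w | ‖q.eval w‖ ≤ t} := by
  set n := q.natDegree
  set a := q.leadingCoeff
  have ha : 0 < ‖a‖ := ht.trans_le hta
  set r := (t / ‖a‖) ^ (n : ℝ)⁻¹
  have hr : 0 < r := rpow_pos_of_pos (div_pos ht ha) _
  have hrn : ‖a‖ * r ^ n = t := by
    rw [rpow_inv_natCast_pow (div_pos ht ha).le hq]
    field_simp
  have hr1 : r ≤ 1 := rpow_le_one (div_pos ht ha).le ((div_le_one ha).2 hta) (by positivity)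
  have hr' : (r : ℂ) ≠ 0 := Complex.ofReal_ne_zero.2 hr.ne'
  have hlead : a * (r : ℂ) ^ n ≠ 0 :=
    mul_ne_zero (leadingCoeff_ne_zero.2 (ne_zero_of_natDegree_gt (Nat.pos_of_ne_zero hq)))
      (pow_ne_zero _ hr')
  refine ⟨C (a * (r : ℂ) ^ n)⁻¹ * q.comp (C (r : ℂ) * X), ?_, (r : ℂ)⁻¹, ?_, ?_⟩
  · rw [Monic, leadingCoeff_mul, leadingCoeff_C,
      leadingCoeff_comp (by rw [natDegree_C_mul_X _ hr']; exact one_ne_zero),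
      leadingCoeff_C_mul_X, inv_mul_cancel₀ hlead]
  · rw [norm_inv, Complex.norm_real, norm_of_nonneg hr.le]
    exact (one_le_inv₀ hr).2 hr1
  · ext z
    rw [mem_smul_set_iff_inv_smul_mem₀ (inv_ne_zero hr'), inv_inv, smul_eq_mul]
    simp only [mem_ofPred_eq, eval_mul, eval_C, eval_comp, eval_X, norm_mul, norm_inv, norm_pow,
      Complex.norm_real, norm_of_nonneg hr.le, hrn]
    rw [inv_mul_le_iff₀ ht, mul_one]

end Polynomial

section Joukowski

variable {K : Type*} [Field K]

/-- `X ^ n * q (X + b / X)` with `n = q.natDegree`, cleared of denominators. -/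
noncomputable def joukowskiPoly (q : K[X]) (b : K) : K[X] :=
  ∑ i ∈ Finset.range (q.natDegree + 1),
    C (q.coeff i) * (X ^ 2 + C b) ^ i * X ^ (q.natDegree - i)

theorem joukowskiPoly_eval (q : K[X]) (b : K) {u : K} (hu : u ≠ 0) :
    (joukowskiPoly q b).eval u = u ^ q.natDegree * q.eval (u + b / u) := by
  rw [joukowskiPoly, eval_finsetSum, eval_eq_sum_range, Finset.mul_sum]
  refine Finset.sum_congr rfl fun i hi => ?_
  have hi : i ≤ q.natDegree := Finset.mem_range_succ_iff.1 hi
  have hu2 : u ^ 2 + b = (u + b / u) * u := by field_simp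
  simp only [eval_mul, eval_pow, eval_add, eval_C, eval_X, hu2, mul_pow]
  rw [← Nat.sub_add_cancel hi, pow_add]
  simp only [Nat.sub_add_cancel hi]
  ring

theorem natDegree_joukowskiPoly_term_le {c b : K} {i n : ℕ} (hi : i ≤ n) :
    (C c * (X ^ 2 + C b) ^ i * X ^ (n - i)).natDegree ≤ n + i := by
  compute_degree
  all_goals omega

theorem natDegree_joukowskiPoly_le (q : K[X]) (b : K) :
    (joukowskiPoly q b).natDegree ≤ 2 * q.natDegree :=
  natDegree_sum_le_of_forall_le _ _ fun i hi =>
    (natDegree_joukowskiPoly_term_le (Finset.mem_range_succ_iff.1 hi)).trans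
      (by have := Finset.mem_range_succ_iff.1 hi; omega)

theorem coeff_joukowskiPoly_two_mul_natDegree (q : K[X]) (b : K) :
    (joukowskiPoly q b).coeff (2 * q.natDegree) = q.leadingCoeff := by
  rw [joukowskiPoly, finsetSum_coeff, Finset.sum_eq_single q.natDegree]
  · have hmon := (monic_X_pow_add_C b two_ne_zero).pow q.natDegree
    have hdeg : ((X ^ 2 + C b) ^ q.natDegree).natDegree = 2 * q.natDegree := by
      rw [natDegree_pow, natDegree_X_pow_add_C, mul_comm]
    rw [Nat.sub_self, pow_zero, mul_one, coeff_C_mul, ← hdeg, hmon.coeff_natDegree, mul_one,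
      leadingCoeff]
  · intro i hi hin
    have hi := Finset.mem_range_succ_iff.1 hi
    exact coeff_eq_zero_of_natDegree_lt
      ((natDegree_joukowskiPoly_term_le hi).trans_lt (by omega))
  · simp

theorem leadingCoeff_joukowskiPoly (q : K[X]) (b : K) :
    (joukowskiPoly q b).leadingCoeff = q.leadingCoeff := by
  rcases eq_or_ne q 0 with rfl | hq
  · simp [joukowskiPoly]
  rw [leadingCoeff, natDegree_eq_of_le_of_coeff_ne_zero (natDegree_joukowskiPoly_le q b)
    (by rwa [coeff_joukowskiPoly_two_mul_natDegree, leadingCoeff_ne_zero]),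
    coeff_joukowskiPoly_two_mul_natDegree]

end Joukowski

theorem le_norm_leadingCoeff_of_joukowski (q : ℂ[X]) (b : ℂ) {t : ℝ}
    (h : ∀ u : ℂ, 1 ≤ ‖u‖ → t < ‖q.eval (u + b / u)‖) : t ≤ ‖q.leadingCoeff‖ := by
  rcases lt_or_ge t 0 with ht | ht
  · exact ht.le.trans (norm_nonneg _)
  rw [← leadingCoeff_joukowskiPoly q b]
  refine le_norm_leadingCoeff_of_roots_le_one (fun z hz => ?_) fun u hu => ?_
  · by_contra! hz1
    have hz0 : z ≠ 0 := norm_pos_iff.1 (one_pos.trans hz1)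
    have hroot := (mem_roots'.1 hz).2
    rw [IsRoot, joukowskiPoly_eval q b hz0, mul_eq_zero] at hroot
    have hq : q.eval (z + b / z) = 0 := hroot.resolve_left (pow_ne_zero _ hz0)
    simpa [hq] using ht.trans_lt (h z hz1.le)
  · rw [joukowskiPoly_eval q b (norm_pos_iff.1 (hu ▸ one_pos)), norm_mul, norm_pow, hu, one_pow,
      one_mul]
    exact (h u hu.ge).le

/-- The Joukowski map `u ↦ u + b / u` sends the circle `‖u‖ = s` onto the ellipse with semi-axes
`s + b / s` and `s - b / s`; for `s ≥ 1` these are at least `1 + b` and `1 - b`. -/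
theorem joukowski_notMem_reProdIm {b A B : ℝ} (hb : 0 ≤ b) (hb1 : b < 1)
    (hAB : (A / (1 + b)) ^ 2 + (B / (1 - b)) ^ 2 < 1) {u : ℂ} (hu : 1 ≤ ‖u‖) :
    u + b / u ∉ Icc (-A) A ×ℂ Icc (-B) B := by
  rintro ⟨hre, him⟩
  set s := ‖u‖
  have hs : 0 < s := one_pos.trans_le hu
  set v := u / s
  have hv : Complex.normSq v = 1 := by
    rw [← Complex.sq_norm, norm_div, Complex.norm_real, norm_of_nonneg hs.le, div_self hs.ne',
      one_pow]
  have hw : u + b / u = s * v + (b / s : ℝ) * (starRingEnd ℂ) v := by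
    have hinv : v⁻¹ = (starRingEnd ℂ) v := by simp [Complex.inv_def, hv]
    have hu' : u = s * v := by
      simp only [v]
      field_simp [Complex.ofReal_ne_zero.2 hs.ne']
    rw [hu', div_eq_mul_inv _ ((s : ℂ) * v), mul_inv, hinv]
    push_cast
    ring
  have hre' : (u + b / u).re = (s + b / s) * v.re := by
    rw [hw]; simp; ring
  have him' : (u + b / u).im = (s - b / s) * v.im := by
    rw [hw]; simp; ring
  have h1 : 1 + b ≤ s + b / s := by
    have : s + b / s - (1 + b) = (s - 1) * (s - b) / s := by field_simp; ring
    exact sub_nonneg.1 (this ▸ div_nonneg (mul_nonneg (by linarith) (by linarith)) hs.le)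
  have h2 : 1 - b ≤ s - b / s := by
    have : s - b / s - (1 - b) = (s - 1) * (s + b) / s := by field_simp; ring
    exact sub_nonneg.1 (this ▸ div_nonneg (mul_nonneg (by linarith) (by linarith)) hs.le)
  have hvre : |v.re| ≤ A / (1 + b) := by
    rw [le_div_iff₀ (by linarith)]
    calc |v.re| * (1 + b) ≤ |v.re| * (s + b / s) := by gcongr
      _ = |(u + b / u).re| := by
        rw [hre', abs_mul, abs_of_pos (a := s + b / s) (by linarith), mul_comm]
      _ ≤ A := abs_le.2 hre
  have hvim : |v.im| ≤ B / (1 - b) := by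
    rw [le_div_iff₀ (by linarith)]
    calc |v.im| * (1 - b) ≤ |v.im| * (s - b / s) := by gcongr
      _ = |(u + b / u).im| := by
        rw [him', abs_mul, abs_of_pos (a := s - b / s) (by linarith), mul_comm]
      _ ≤ B := abs_le.2 him
  have hre2 := pow_le_pow_left₀ (abs_nonneg _) hvre 2
  have him2 := pow_le_pow_left₀ (abs_nonneg _) hvim 2
  rw [sq_abs] at hre2 him2
  rw [Complex.normSq_apply] at hv
  nlinarith

theorem exists_pos_sq_div_add_sq_div_lt_one {A α β : ℝ} (hA : 0 ≤ A) (hAα : A < α) :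
    ∃ ρ > 0, ((A + ρ) / α) ^ 2 + (ρ / β) ^ 2 < 1 := by
  have h0 : ((A + 0) / α) ^ 2 + (0 / β) ^ 2 < 1 := by
    have hα : 0 < α := hA.trans_lt hAα
    simpa using pow_lt_one₀ (div_nonneg hA hα.le) ((div_lt_one hα).2 hAα) two_ne_zero
  have hcont : Continuous fun ρ : ℝ => ((A + ρ) / α) ^ 2 + (ρ / β) ^ 2 := by fun_prop
  obtain ⟨ρ, hρ1, hρ0⟩ := (((hcont.tendsto 0).eventually (gt_mem_nhds h0)).filter_mono
    nhdsWithin_le_nhds |>.and (self_mem_nhdsWithin : Ioi (0 : ℝ) ∈ 𝓝[>] 0)).exists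
  exact ⟨ρ, hρ0, hρ1⟩

theorem Convex.reProdIm {s t : Set ℝ} (hs : Convex ℝ s) (ht : Convex ℝ t) :
    Convex ℝ (s ×ℂ t) :=
  (hs.linear_preimage Complex.reLm).inter (ht.linear_preimage Complex.imLm)

/-- Every point off `[-a, a] ×ℂ H` lies beyond one of the lines `re = ± a` or on a horizontal line
missing `[-a, a] ×ℂ H`, and each such line meets both half-planes `re < -a` and `re > a`. -/
theorem isPreconnected_compl_Icc_reProdIm (a : ℝ) {H : Set ℝ} (hH : H ≠ univ) :
    IsPreconnected (Icc (-a) a ×ℂ H)ᶜ := by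
  obtain ⟨h₀, hh₀⟩ := (ne_univ_iff_exists_notMem H).1 hH
  have hcompl : (Icc (-a) a ×ℂ H)ᶜ =
      ⋃ h : ↥Hᶜ, (Iio (-a) ×ℂ univ ∪ univ ×ℂ {(h : ℝ)}) ∪ Ioi a ×ℂ univ := by
    ext z
    simp only [mem_compl_iff, Complex.mem_reProdIm, mem_Icc, mem_iUnion, mem_union, mem_Iio,
      mem_univ, and_true, true_and, mem_singleton_iff, mem_Ioi, Subtype.exists, exists_prop]
    constructor
    · intro hz
      by_cases hzH : z.im ∈ H
      · exact ⟨h₀, hh₀, by grind⟩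
      · exact ⟨z.im, hzH, by simp⟩
    · rintro ⟨h, hh, hz⟩ ⟨⟨h1, h2⟩, h3⟩
      grind
  rw [hcompl]
  refine isPreconnected_iUnion ⟨(-a - 1 : ℝ), mem_iInter.2 fun _ => ?_⟩ fun h => ?_
  · simp [Complex.mem_reProdIm]
  · refine (((convex_Iio _).reProdIm convex_univ).isPreconnected.union ⟨-a - 1, h⟩ ?_ ?_
      (convex_univ.reProdIm (convex_singleton _)).isPreconnected).union ⟨a + 1, h⟩ ?_ ?_
      ((convex_Ioi _).reProdIm convex_univ).isPreconnected <;> simp [Complex.mem_reProdIm]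

theorem connectedComponentIn_ne_of_notMem_image {X α : Type*} [TopologicalSpace X]
    [LinearOrder α] [TopologicalSpace α] [OrderClosedTopology α] {S : Set X} {f : X → α}
    (hf : ContinuousOn f S) {x y : X} (hx : x ∈ S) (hy : y ∈ S) {v : α} (hxv : f x ≤ v)
    (hvy : v ≤ f y) (hv : v ∉ f '' S) : connectedComponentIn S x ≠ connectedComponentIn S y := by
  intro hxy
  have hC := isPreconnected_connectedComponentIn.image f
    (hf.mono (connectedComponentIn_subset S x))
  have hyC : y ∈ connectedComponentIn S x := hxy ▸ mem_connectedComponentIn hy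
  exact hv (image_mono (connectedComponentIn_subset S x)
    (hC.Icc_subset (mem_image_of_mem f (mem_connectedComponentIn hx)) (mem_image_of_mem f hyC)
      ⟨hxv, hvy⟩))

theorem connectedComponentIn_smul₀ {G₀ X : Type*} [GroupWithZero G₀] [TopologicalSpace X]
    [MulAction G₀ X] [ContinuousConstSMul G₀ X] {c : G₀} (hc : c ≠ 0) {S : Set X} {x : X}
    (hx : x ∈ S) : connectedComponentIn (c • S) (c • x) = c • connectedComponentIn S x := by
  simpa [Set.image_smul] using ((Homeomorph.smulOfNeZero c hc).image_connectedComponentIn hx).symm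

def needles (a δ : ℝ) (N : ℕ) : Set ℂ :=
  Icc (-a) a ×ℂ ((fun k : ℕ => k * δ) '' Iic N)

section Needles

variable {a b δ ε t : ℝ} {N : ℕ} {q : ℂ[X]}

theorem mem_needles_of_le {x : ℝ} (hx : |x| ≤ a) {k : ℕ} (hk : k ≤ N) :
    (⟨x, k * δ⟩ : ℂ) ∈ needles a δ N :=
  ⟨abs_le.1 hx, k, hk, rfl⟩

theorem isCompact_needles : IsCompact (needles a δ N) :=
  isCompact_Icc.reProdIm ((finite_Iic N).image _).isCompact

theorem isConnected_compl_needles : IsConnected (needles a δ N)ᶜ := by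
  refine ⟨⟨(|a| + 1 : ℝ), fun h => ?_⟩, isPreconnected_compl_Icc_reProdIm a
    ((ne_univ_iff_exists_notMem _).2 ((finite_Iic N).image _).exists_notMem)⟩
  have := h.1.2
  simp only [Complex.ofReal_re] at this
  linarith [le_abs_self a]

theorem needles_infinite (ha : 0 < a) : (needles a δ N).Infinite := by
  refine ((Icc_infinite (neg_lt_self ha)).image Complex.ofReal_injective.injOn).mono ?_
  rintro _ ⟨x, hx, rfl⟩
  exact ⟨by simpa using hx, 0, N.zero_le, by simp⟩

theorem exists_near_of_infDist_needles_le (ha : 0 ≤ a) {z : ℂ}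
    (hz : infDist z (needles a δ N) ≤ ε) : |z.re| ≤ a + ε ∧ ∃ k ≤ N, |z.im - k * δ| ≤ ε := by
  obtain ⟨w, ⟨hwre, k, hk, hwim⟩, hzw⟩ :=
    (isCompact_needles (a := a) (δ := δ) (N := N)).exists_infDist_eq_dist
      ⟨_, mem_needles_of_le (x := 0) (by simpa using ha) N.zero_le⟩ z
  rw [hzw, Complex.dist_eq] at hz
  have hre := (Complex.abs_re_le_norm (z - w)).trans hz
  have him := (Complex.abs_im_le_norm (z - w)).trans hz
  rw [Complex.sub_re] at hre
  rw [Complex.sub_im, ← hwim] at him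
  exact ⟨by linarith [abs_sub_abs_le_abs_sub z.re w.re, abs_le.2 hwre], k, hk, him⟩

theorem sublevel_subset_reProdIm (ha : 0 ≤ a) (hδ : 0 ≤ δ)
    (hLK : {z | ‖q.eval z‖ ≤ t} ⊆ {z | infDist z (needles a δ N) ≤ ε}) :
    {z | ‖q.eval z‖ ≤ t} ⊆ Icc (-(a + ε)) (a + ε) ×ℂ Icc (-(N * δ + ε)) (N * δ + ε) := by
  intro z hz
  obtain ⟨hre, k, hk, him⟩ := exists_near_of_infDist_needles_le ha (hLK hz)
  have hkδ : k * δ ≤ N * δ := by gcongr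
  have := abs_le.1 him
  exact ⟨abs_le.1 hre, by constructor <;> nlinarith⟩

theorem im_ne_of_mem_sublevel (ha : 0 ≤ a) (hδ : 0 < δ) (hε : ε < δ / 2)
    (hLK : {z | ‖q.eval z‖ ≤ t} ⊆ {z | infDist z (needles a δ N) ≤ ε}) {z : ℂ}
    (hz : ‖q.eval z‖ ≤ t) (k : ℕ) : z.im ≠ k * δ + δ / 2 := by
  intro hzk
  obtain ⟨-, m, -, hm⟩ := exists_near_of_infDist_needles_le ha (hLK hz)
  rw [hzk, abs_le] at hm
  rcases le_or_gt m k with hmk | hkm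
  · have : (m : ℝ) * δ ≤ k * δ := by gcongr
    linarith [hm.2]
  · have : ((k : ℝ) + 1) * δ ≤ m * δ := by gcongr; exact_mod_cast hkm
    linarith [hm.1]

theorem exists_needle_components (ha : 0 ≤ a) (hδ : 0 < δ) (hε : ε < δ / 2)
    (hKL : needles a δ N ⊆ {z | ‖q.eval z‖ ≤ t})
    (hLK : {z | ‖q.eval z‖ ≤ t} ⊆ {z | infDist z (needles a δ N) ≤ ε}) :
    ∃ w : Fin N → ℂ, (∀ i, w i ∈ {z | ‖q.eval z‖ ≤ t}) ∧
      (∀ i j, i ≠ j → connectedComponentIn {z | ‖q.eval z‖ ≤ t} (w i) ≠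
        connectedComponentIn {z | ‖q.eval z‖ ≤ t} (w j)) ∧
      ∀ i, 2 * a ≤ diam (connectedComponentIn {z | ‖q.eval z‖ ≤ t} (w i)) := by
  set L := {z | ‖q.eval z‖ ≤ t}
  have hmem : ∀ {x : ℝ}, |x| ≤ a → ∀ i : Fin N, (⟨x, i * δ⟩ : ℂ) ∈ L :=
    fun hx i => hKL (mem_needles_of_le hx i.is_lt.le)
  have hwa : |-a| ≤ a := by rw [abs_neg, abs_of_nonneg ha]
  refine ⟨fun i => ⟨-a, i * δ⟩, fun i => hmem hwa i, ?_, fun i => ?_⟩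
  · have hlt : ∀ i j : Fin N, i < j →
        connectedComponentIn L ⟨-a, i * δ⟩ ≠ connectedComponentIn L ⟨-a, j * δ⟩ := by
      intro i j hij
      have : ((i : ℕ) + 1 : ℝ) * δ ≤ (j : ℕ) * δ := by gcongr; exact_mod_cast hij
      exact connectedComponentIn_ne_of_notMem_image Complex.continuous_im.continuousOn
        (hmem hwa i) (hmem hwa j) (v := i * δ + δ / 2) (by simp; linarith) (by simp; linarith)
        fun ⟨z, hz, hzv⟩ => im_ne_of_mem_sublevel ha hδ hε hLK hz i hzv
    intro i j hij
    rcases hij.lt_or_gt with h | h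
    · exact hlt i j h
    · exact (hlt j i h).symm
  · have hseg : IsPreconnected (Icc (-a) a ×ℂ {(i : ℝ) * δ}) :=
      ((convex_Icc _ _).reProdIm (convex_singleton _)).isPreconnected
    have hsegL : Icc (-a) a ×ℂ {(i : ℝ) * δ} ⊆ L := fun z ⟨hre, him⟩ => by
      rw [show z = ⟨z.re, i * δ⟩ from Complex.ext rfl him]
      exact hmem (abs_le.2 hre) i
    have hend : (⟨a, i * δ⟩ : ℂ) ∈ connectedComponentIn L ⟨-a, i * δ⟩ :=
      hseg.subset_connectedComponentIn ⟨⟨le_rfl, by linarith⟩, rfl⟩ hsegL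
        ⟨⟨by linarith, le_rfl⟩, rfl⟩
    have hbdd : Bornology.IsBounded (connectedComponentIn L ⟨-a, i * δ⟩) :=
      ((isBounded_Icc _ _).reProdIm (isBounded_Icc _ _)).subset
        ((connectedComponentIn_subset _ _).trans (sublevel_subset_reProdIm ha hδ.le hLK))
    calc 2 * a = dist (⟨-a, i * δ⟩ : ℂ) ⟨a, i * δ⟩ := by
          rw [Complex.dist_of_im_eq (z := ⟨-a, _⟩) (w := ⟨a, _⟩) rfl, Real.dist_eq, ← neg_add',
            abs_neg, abs_of_nonneg (by linarith)]
          ring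
      _ ≤ _ := dist_le_diam_of_mem hbdd (mem_connectedComponentIn (hmem hwa i)) hend

theorem exists_monic_of_needles (ha : 0 < a) (hb : 0 ≤ b) (hb1 : b < 1) (hδ : 0 < δ)
    (hε : ε < δ / 2) (hab : ((a + ε) / (1 + b)) ^ 2 + ((N * δ + ε) / (1 - b)) ^ 2 < 1)
    (hKL : needles a δ N ⊆ {z | ‖q.eval z‖ ≤ t})
    (hLK : {z | ‖q.eval z‖ ≤ t} ⊆ {z | infDist z (needles a δ N) ≤ ε}) :
    ∃ p : ℂ[X], p.Monic ∧ ∃ zs : Fin N → ℂ,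
      (∀ i, zs i ∈ {z : ℂ | ‖p.eval z‖ ≤ 1}) ∧
      (∀ i j, i ≠ j → connectedComponentIn {z : ℂ | ‖p.eval z‖ ≤ 1} (zs i) ≠
        connectedComponentIn {z : ℂ | ‖p.eval z‖ ≤ 1} (zs j)) ∧
      ∀ i, 2 * a ≤ diam (connectedComponentIn {z : ℂ | ‖p.eval z‖ ≤ 1} (zs i)) := by
  have hjouk : ∀ u : ℂ, 1 ≤ ‖u‖ → t < ‖q.eval (u + b / u)‖ := fun u hu =>
    lt_of_not_ge fun h => joukowski_notMem_reProdIm hb hb1 hab hu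
      (sublevel_subset_reProdIm ha.le hδ.le hLK h)
  have hx : (⟨0, (0 : ℕ) * δ⟩ : ℂ) ∈ needles a δ N :=
    mem_needles_of_le (by simpa using ha.le) N.zero_le
  have hq : q.natDegree ≠ 0 := natDegree_ne_zero_of_norm_eval_le_lt (hKL hx) (hjouk 1 (by simp))
  have ht : 0 < t := pos_of_infinite_subset_sublevel
    (ne_zero_of_natDegree_gt (Nat.pos_of_ne_zero hq)) (needles_infinite ha) hKL
  obtain ⟨p, hp, c, hc, hpq⟩ :=
    exists_monic_sublevel_eq_smul hq ht (le_norm_leadingCoeff_of_joukowski q b hjouk)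
  have hc0 : c ≠ 0 := norm_pos_iff.1 (one_pos.trans_le hc)
  obtain ⟨w, hwL, hwne, hwdiam⟩ := exists_needle_components ha.le hδ hε hKL hLK
  refine ⟨p, hp, fun i => c • w i, fun i => hpq ▸ smul_mem_smul_set (hwL i), fun i j hij => ?_,
    fun i => ?_⟩ <;> rw [hpq, connectedComponentIn_smul₀ hc0 (hwL i)]
  · rw [connectedComponentIn_smul₀ hc0 (hwL j)]
    exact (image_injective.2 (MulAction.injective₀ hc0)).ne (hwne i j hij)
  · rw [diam_smul₀]
    exact (hwdiam i).trans (le_mul_of_one_le_left diam_nonneg hc)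

end Needles

theorem erdos_511
    (hHLT : ∀ K : Set ℂ, IsCompact K → IsConnected Kᶜ → ∀ ε : ℝ, 0 < ε →
      ∃ q : Polynomial ℂ,
        K ⊆ {z : ℂ | ‖q.eval z‖ ≤
              sSup ((fun z => ‖q.eval z‖) '' K)} ∧
        {z : ℂ | ‖q.eval z‖ ≤
              sSup ((fun z => ‖q.eval z‖) '' K)} ⊆
          {z : ℂ | Metric.infDist z K ≤ ε}) :
    ∀ c : ℝ, 0 < c → c < 4 → ∀ N : ℕ,
      ∃ p : Polynomial ℂ, p.Monic ∧
        ∃ zs : Fin N → ℂ,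
          (∀ i, zs i ∈ {z : ℂ | ‖p.eval z‖ ≤ 1}) ∧
          (∀ i j, i ≠ j →
            connectedComponentIn {z : ℂ | ‖p.eval z‖ ≤ 1} (zs i) ≠
              connectedComponentIn {z : ℂ | ‖p.eval z‖ ≤ 1} (zs j)) ∧
          ∀ i, c ≤ Metric.diam
            (connectedComponentIn {z : ℂ | ‖p.eval z‖ ≤ 1} (zs i)) := by
  intro c hc hc4 N
  obtain ⟨r, hcr, hr1⟩ : ∃ r : ℝ, c < 4 * r ∧ r < 1 := ⟨(c + 4) / 8, by linarith, by linarith⟩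
  have hr : 0 < r := by linarith
  obtain ⟨ρ, hρ, hρr⟩ := exists_pos_sq_div_add_sq_div_lt_one (β := 1 - r ^ 2)
    (by positivity : 0 ≤ 2 * r) (by nlinarith : 2 * r < 1 + r ^ 2)
  obtain ⟨δ, hδ, hNδ⟩ : ∃ δ > 0, (N + 1) * δ = ρ :=
    ⟨ρ / (N + 1), by positivity, by field_simp⟩
  obtain ⟨q, hKq, hqK⟩ := hHLT (needles (2 * r) δ N) isCompact_needles isConnected_compl_needles
    (δ / 4) (by positivity)
  have hab : ((2 * r + δ / 4) / (1 + r ^ 2)) ^ 2 + ((N * δ + δ / 4) / (1 - r ^ 2)) ^ 2 < 1 := by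
    refine lt_of_le_of_lt ?_ hρr
    have : 0 < 1 - r ^ 2 := by nlinarith
    gcongr <;> nlinarith [mul_nonneg N.cast_nonneg hδ.le]
  obtain ⟨p, hp, zs, hzs, hne, hdiam⟩ := exists_monic_of_needles (by positivity) (sq_nonneg r)
    (by nlinarith) hδ (by linarith) hab hKq hqK
  exact ⟨p, hp, zs, hzs, hne, fun i => (by linarith : c ≤ 2 * (2 * r)).trans (hdiam i)⟩
end
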